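/- In any parity game, every position p is either in W₀ or in W₁ (the winning sets of the two players are a partition of all positions), and for each i ∈ {0,1}, player i wins positionally from every position in Wᵢ, i.e. there is a positional strategy for player i that wins from every position of Wᵢ against every strategy of the other player. -/

import Mathlib

set_option maxHeartbeats 1000000

namespace MuCalc

attribute [local instance] Classical.propDecidable

/-- μ-calculus formulas. -/
inductive Formula (Var : Type*) (Prp : Type*) (Act : Type*) where
  | var : Var → Formula Var Prp Act
  | prop : Prp → Formula Var Prp Act
  | dia : Act → Formula Var Prp Act → Formula Var Prp Act
  | box : Act → Formula Var Prp Act → Formula Var Prp Act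
  | and : Formula Var Prp Act → Formula Var Prp Act → Formula Var Prp Act
  | or : Formula Var Prp Act → Formula Var Prp Act → Formula Var Prp Act
  | mu : Var → Formula Var Prp Act → Formula Var Prp Act
  | nu : Var → Formula Var Prp Act → Formula Var Prp Act

namespace Formula

variable {Var Prp Act : Type*}

/-- Free variables. -/
noncomputable def FV : Formula Var Prp Act → Finset Var
  | var X => {X}
  | prop _ => ∅
  | dia _ φ => FV φ
  | box _ φ => FV φ
  | and φ ψ => FV φ ∪ FV ψ
  | or φ ψ => FV φ ∪ FV ψ
  | mu X φ => FV φ \ {X}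
  | nu X φ => FV φ \ {X}

/-- Substitution of a formula for the free occurrences of a variable. -/
noncomputable def subst : Formula Var Prp Act → Var → Formula Var Prp Act → Formula Var Prp Act
  | var Y, X, ρ => if Y = X then ρ else var Y
  | prop P, _, _ => prop P
  | dia a φ, X, ρ => dia a (subst φ X ρ)
  | box a φ, X, ρ => box a (subst φ X ρ)
  | and φ ψ, X, ρ => and (subst φ X ρ) (subst ψ X ρ)
  | or φ ψ, X, ρ => or (subst φ X ρ) (subst ψ X ρ)
  | mu Y φ, X, ρ => if Y = X then mu Y φ else mu Y (subst φ X ρ)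
  | nu Y φ, X, ρ => if Y = X then nu Y φ else nu Y (subst φ X ρ)

/-- Nesting depth `nd(X, φ)` of a variable in a formula. -/
noncomputable def ndVar (X : Var) : Formula Var Prp Act → ℕ
  | var _ => 0
  | prop _ => 0
  | dia _ φ => ndVar X φ
  | box _ φ => ndVar X φ
  | and φ ψ => max (ndVar X φ) (ndVar X ψ)
  | or φ ψ => max (ndVar X φ) (ndVar X ψ)
  | mu Y φ => if X ≠ Y ∧ X ∈ FV φ then max (1 + ndVar Y φ) (ndVar X φ) else 0
  | nu Y φ => if X ≠ Y ∧ X ∈ FV φ then max (1 + ndVar Y φ) (ndVar X φ) else 0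

/-- Nesting depth `nd(φ)` of a formula: `nd(QX.φ) = 1 + nd(X,φ)` and `0` otherwise. -/
noncomputable def nd : Formula Var Prp Act → ℕ
  | mu X φ => 1 + ndVar X φ
  | nu X φ => 1 + ndVar X φ
  | _ => 0

/-- The dual of a formula. -/
def dual : Formula Var Prp Act → Formula Var Prp Act
  | var X => var X
  | prop P => prop P
  | dia a φ => box a (dual φ)
  | box a φ => dia a (dual φ)
  | and φ ψ => or (dual φ) (dual ψ)
  | or φ ψ => and (dual φ) (dual ψ)
  | mu X φ => nu X (dual φ)
  | nu X φ => mu X (dual φ)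

/-- A fixpoint formula `QX.φ` with `Q ∈ {μ, ν}`: `fp true = μ`, `fp false = ν`. -/
def fp (q : Bool) (X : Var) (φ : Formula Var Prp Act) : Formula Var Prp Act :=
  if q then mu X φ else nu X φ

/-- The (reflexive, transitive) subformula relation. -/
inductive Subformula : Formula Var Prp Act → Formula Var Prp Act → Prop
  | refl (φ) : Subformula φ φ
  | dia {ρ φ} (a : Act) : Subformula ρ φ → Subformula ρ (dia a φ)
  | box {ρ φ} (a : Act) : Subformula ρ φ → Subformula ρ (box a φ)
  | and_left {ρ φ ψ} : Subformula ρ φ → Subformula ρ (and φ ψ)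
  | and_right {ρ φ ψ} : Subformula ρ ψ → Subformula ρ (and φ ψ)
  | or_left {ρ φ ψ} : Subformula ρ φ → Subformula ρ (or φ ψ)
  | or_right {ρ φ ψ} : Subformula ρ ψ → Subformula ρ (or φ ψ)
  | mu {ρ φ} (X : Var) : Subformula ρ φ → Subformula ρ (mu X φ)
  | nu {ρ φ} (X : Var) : Subformula ρ φ → Subformula ρ (nu X φ)

end Formula

/-- A labelled transition system: a family of total transition relations and
a labelling of states with the atomic propositions true there. -/
structure LTS (S : Type*) (Prp : Type*) (Act : Type*) where
  trans : Act → S → S → Prop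
  total : ∀ a s, ∃ t, trans a s t
  label : S → Set Prp

variable {S Var Prp Act : Type*}

/-- The semantics `⟦φ⟧η ⊆ S`, with least/greatest fixpoints given by Knaster–Tarski. -/
noncomputable def LTS.sem (T : LTS S Prp Act) :
    Formula Var Prp Act → (Var → Set S) → Set S
  | .var X, η => η X
  | .prop P, _ => {s | P ∈ T.label s}
  | .dia a φ, η => {s | ∃ t, T.trans a s t ∧ t ∈ T.sem φ η}
  | .box a φ, η => {s | ∀ t, T.trans a s t → t ∈ T.sem φ η}
  | .and φ ψ, η => T.sem φ η ∩ T.sem ψ η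
  | .or φ ψ, η => T.sem φ η ∪ T.sem ψ η
  | .mu X φ, η => sInf {U : Set S | T.sem φ (Function.update η X U) ⊆ U}
  | .nu X φ, η => sSup {U : Set S | U ⊆ T.sem φ (Function.update η X U)}

/-- A parity game: positions owned by Player 0 and Player 1, a total edge
relation, and a priority function. -/
structure ParityGame (Pos : Type*) where
  owner : Pos → Fin 2
  edge : Pos → Pos → Prop
  total : ∀ p, ∃ q, edge p q
  priority : Pos → ℕ

namespace ParityGame

variable {Pos : Type*}

/-- A strategy for player `i`: given the history (the earlier positions of the
play, in order) and the current position, pick a move; all prescribed moves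
must follow edges when the current position belongs to player `i`. -/
structure Strategy (G : ParityGame Pos) (i : Fin 2) where
  move : List Pos → Pos → Pos
  valid : ∀ h p, G.owner p = i → G.edge p (move h p)

/-- A strategy is positional if its moves only depend on the current position. -/
def Strategy.Positional {G : ParityGame Pos} {i : Fin 2} (σ : G.Strategy i) : Prop :=
  ∀ h h' p, σ.move h p = σ.move h' p

/-- The play determined by a joint move function `f` (history, current ↦ next):
current position together with the history. -/
def playHist (f : List Pos → Pos → Pos) (p : Pos) : ℕ → Pos × List Pos
  | 0 => (p, [])
  | n + 1 =>
    let q := playHist f p n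
    (f q.2 q.1, q.2 ++ [q.1])

/-- The infinite play determined by a joint move function. -/
def play (f : List Pos → Pos → Pos) (p : Pos) (n : ℕ) : Pos :=
  (playHist f p n).1

/-- The joint move function of a strategy for player `i` and a counterstrategy. -/
def Strategy.combine {G : ParityGame Pos} {i : Fin 2} (σ : G.Strategy i)
    (τ : G.Strategy (1 - i)) : List Pos → Pos → Pos :=
  fun h p => if G.owner p = i then σ.move h p else τ.move h p

/-- An infinite sequence of positions is a play if successive positions follow edges. -/
def IsPlay (G : ParityGame Pos) (f : ℕ → Pos) : Prop :=
  ∀ n, G.edge (f n) (f (n + 1))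

/-- The largest priority occurring infinitely often in an infinite play. -/
noncomputable def maxInfPriority (G : ParityGame Pos) (f : ℕ → Pos) : ℕ :=
  sSup {k | {n | G.priority (f n) = k}.Infinite}

/-- Player `i` wins the infinite play `f`: the largest priority occurring
infinitely often has parity `i`. -/
def WinsPlaySeq (G : ParityGame Pos) (i : Fin 2) (f : ℕ → Pos) : Prop :=
  G.maxInfPriority f % 2 = i.val

/-- `σ` (for player `i`) wins the play from `p` against counterstrategy `τ`. -/
def Strategy.WinsAgainst {G : ParityGame Pos} {i : Fin 2} (σ : G.Strategy i)
    (τ : G.Strategy (1 - i)) (p : Pos) : Prop :=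
  G.WinsPlaySeq i (play (σ.combine τ) p)

/-- `σ` is a winning strategy for player `i` from position `p`. -/
def Strategy.WinsFrom {G : ParityGame Pos} {i : Fin 2} (σ : G.Strategy i) (p : Pos) : Prop :=
  ∀ τ : G.Strategy (1 - i), σ.WinsAgainst τ p

/-- Player `i` wins from position `p`. -/
def WinsFrom (G : ParityGame Pos) (i : Fin 2) (p : Pos) : Prop :=
  ∃ σ : G.Strategy i, σ.WinsFrom p

end ParityGame

/-- Ownership of positions in the game `G(T,η)`: opponent (Player 1) moves at
conjunctions and boxes, proponent (Player 0) everywhere else. -/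
def gameOwner : S × Formula Var Prp Act → Fin 2
  | (_, .and _ _) => 1
  | (_, .box _ _) => 1
  | _ => 0

/-- The moves of the game `G(T,η)`. -/
noncomputable def gameMove (T : LTS S Prp Act) :
    S × Formula Var Prp Act → S × Formula Var Prp Act → Prop
  | (s, .or φ ψ), q => q = (s, φ) ∨ q = (s, ψ)
  | (s, .and φ ψ), q => q = (s, φ) ∨ q = (s, ψ)
  | (s, .dia a φ), q => q.2 = φ ∧ T.trans a s q.1
  | (s, .box a φ), q => q.2 = φ ∧ T.trans a s q.1
  | (s, .mu X φ), q => q = (s, Formula.subst φ X (.mu X φ))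
  | (s, .nu X φ), q => q = (s, Formula.subst φ X (.nu X φ))
  | (s, .var X), q => q = (s, .var X)
  | (s, .prop P), q => q = (s, .prop P)

/-- The priorities of the game `G(T,η)`. -/
noncomputable def gamePriority (T : LTS S Prp Act) (η : Var → Set S) :
    S × Formula Var Prp Act → ℕ
  | (_, .mu X φ) => 2 * Formula.nd (Formula.mu X φ) + 1
  | (_, .nu X φ) => 2 * Formula.nd (Formula.nu X φ)
  | (s, .prop P) => if P ∈ T.label s then 0 else 1
  | (s, .var X) => if s ∈ η X then 0 else 1
  | (_, _) => 0

/-- The parity game `G(T,η)` associated with an LTS `T` and environment `η`. -/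
noncomputable def LTS.game (T : LTS S Prp Act) (η : Var → Set S) :
    ParityGame (S × Formula Var Prp Act) where
  owner := gameOwner
  edge := gameMove T
  total := by
    rintro ⟨s, φ⟩
    cases φ with
    | var X => exact ⟨(s, .var X), rfl⟩
    | prop P => exact ⟨(s, .prop P), rfl⟩
    | dia a φ => obtain ⟨t, ht⟩ := T.total a s; exact ⟨(t, φ), rfl, ht⟩
    | box a φ => obtain ⟨t, ht⟩ := T.total a s; exact ⟨(t, φ), rfl, ht⟩
    | and φ ψ => exact ⟨(s, φ), Or.inl rfl⟩
    | or φ ψ => exact ⟨(s, φ), Or.inl rfl⟩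
    | mu X φ => exact ⟨(s, Formula.subst φ X (.mu X φ)), rfl⟩
    | nu X φ => exact ⟨(s, Formula.subst φ X (.nu X φ)), rfl⟩
  priority := gamePriority T η

/-- The advice values `{1, 2, *} ∪ S` of a partial winning strategy. -/
inductive Advice (S : Type*) where
  | one : Advice S
  | two : Advice S
  | star : Advice S
  | state : S → Advice S

/-- A partial strategy: a partial function from positions of `G(T,η)` to advice. -/
def PStrat (S Var Prp Act : Type*) :=
  S × Formula Var Prp Act → Option (Advice S)

/-- The domain of a partial strategy. -/
def PStrat.dom (sg : PStrat S Var Prp Act) : Set (S × Formula Var Prp Act) :=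
  {q | sg q ≠ none}

/-- The move function of the Player-0 strategy induced by a partial strategy:
follow the advice where present (and sensible), move arbitrarily elsewhere. -/
noncomputable def inducedMove (T : LTS S Prp Act) (sg : PStrat S Var Prp Act) :
    S × Formula Var Prp Act → S × Formula Var Prp Act
  | (s, .var X) => (s, .var X)
  | (s, .prop P) => (s, .prop P)
  | (s, .and φ ψ) => (s, φ)
  | (s, .or φ ψ) => if sg (s, .or φ ψ) = some .two then (s, ψ) else (s, φ)
  | (s, .box a φ) => ((T.total a s).choose, φ)
  | (s, .dia a φ) =>
    if h : ∃ t, sg (s, .dia a φ) = some (.state t) ∧ T.trans a s t then (h.choose, φ)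
    else ((T.total a s).choose, φ)
  | (s, .mu X φ) => (s, Formula.subst φ X (.mu X φ))
  | (s, .nu X φ) => (s, Formula.subst φ X (.nu X φ))

/-- The Player-0 strategy induced by a partial strategy. -/
noncomputable def inducedStrategy (T : LTS S Prp Act) (η : Var → Set S)
    (sg : PStrat S Var Prp Act) : (T.game η).Strategy 0 where
  move := fun _ p => inducedMove T sg p
  valid := by
    rintro h ⟨s, φ⟩ _
    show gameMove T (s, φ) (inducedMove T sg (s, φ))
    cases φ with
    | var X => exact rfl
    | prop P => exact rfl
    | and φ ψ => exact Or.inl rfl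
    | or φ ψ =>
      show inducedMove T sg (s, .or φ ψ) = (s, φ) ∨ inducedMove T sg (s, .or φ ψ) = (s, ψ)
      rw [inducedMove]
      split
      · exact Or.inr rfl
      · exact Or.inl rfl
    | box a φ => exact ⟨rfl, (T.total a s).choose_spec⟩
    | dia a φ =>
      show (inducedMove T sg (s, .dia a φ)).2 = φ ∧ T.trans a s (inducedMove T sg (s, .dia a φ)).1
      rw [inducedMove]
      split
      next hh => exact ⟨rfl, hh.choose_spec.2⟩
      next => exact ⟨rfl, (T.total a s).choose_spec⟩
    | mu X φ => exact rfl
    | nu X φ => exact rfl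

/-- A partial winning strategy for the game `G(T,η)` (conditions STAR, OR, DIA, WIN). -/
structure IsPWS (T : LTS S Prp Act) (η : Var → Set S) (sg : PStrat S Var Prp Act) : Prop where
  star : ∀ s (φ : Formula Var Prp Act), sg (s, φ) = some .star →
    ∀ q, gameMove T (s, φ) q → sg q ≠ none
  or_one : ∀ s (φ : Formula Var Prp Act), sg (s, φ) = some .one →
    ∃ φ₁ φ₂, φ = Formula.or φ₁ φ₂ ∧ sg (s, φ₁) ≠ none
  or_two : ∀ s (φ : Formula Var Prp Act), sg (s, φ) = some .two →
    ∃ φ₁ φ₂, φ = Formula.or φ₁ φ₂ ∧ sg (s, φ₂) ≠ none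
  dia : ∀ s (φ : Formula Var Prp Act) t, sg (s, φ) = some (.state t) →
    ∃ a ψ, φ = Formula.dia a ψ ∧ T.trans a s t ∧ sg (t, ψ) ≠ none
  win : ∀ q ∈ PStrat.dom sg, (inducedStrategy T η sg).WinsFrom q

/-- The sum `Σ + Σ'` of two partial strategies, preferring the left one. -/
def pwsAdd (sg sg' : PStrat S Var Prp Act) : PStrat S Var Prp Act :=
  fun q => (sg q).orElse (fun _ => sg' q)

/-- The substitution-composition `Σ[X:=φ, Σ']` of partial strategies. -/
noncomputable def pwsSubst (sg : PStrat S Var Prp Act) (X : Var)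
    (φ : Formula Var Prp Act) (sg' : PStrat S Var Prp Act) : PStrat S Var Prp Act :=
  fun q =>
    (sg' q).orElse (fun _ =>
      if h : ∃ ψ, q.2 = Formula.subst ψ X φ ∧ sg (q.1, ψ) ≠ none
      then sg (q.1, h.choose) else none)

/-- The instrumented fixpoint iteration `SEM(φ)_η`, computing a partial
winning strategy by fixpoint iteration. -/
noncomputable def SEM [Fintype S] (T : LTS S Prp Act) :
    Formula Var Prp Act → (Var → Set S) → PStrat S Var Prp Act
  | .var X, η => fun q => if q.2 = Formula.var X ∧ q.1 ∈ η X then some .star else none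
  | .prop P, _ => fun q => if q.2 = Formula.prop P ∧ P ∈ T.label q.1 then some .star else none
  | .and φ ψ, η =>
    pwsAdd (SEM T φ η) (pwsAdd (SEM T ψ η)
      (fun q => if q.2 = Formula.and φ ψ ∧ SEM T φ η (q.1, φ) ≠ none ∧ SEM T ψ η (q.1, ψ) ≠ none
        then some .star else none))
  | .or φ ψ, η =>
    pwsAdd (SEM T φ η) (pwsAdd (SEM T ψ η) (pwsAdd
      (fun q => if q.2 = Formula.or φ ψ ∧ SEM T φ η (q.1, φ) ≠ none then some .one else none)
      (fun q => if q.2 = Formula.or φ ψ ∧ SEM T ψ η (q.1, ψ) ≠ none then some .two else none)))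
  | .box a φ, η =>
    pwsAdd (SEM T φ η)
      (fun q => if q.2 = Formula.box a φ ∧ ∀ t, T.trans a q.1 t → SEM T φ η (t, φ) ≠ none
        then some .star else none)
  | .dia a φ, η =>
    pwsAdd (SEM T φ η)
      (fun q =>
        if h : q.2 = Formula.dia a φ ∧ ∃ t, T.trans a q.1 t ∧ SEM T φ η (t, φ) ≠ none
        then some (.state h.2.choose) else none)
  | .mu X φ, η =>
    (fun sgn : PStrat S Var Prp Act =>
        pwsSubst (SEM T φ (Function.update η X {s | sgn (s, φ) ≠ none}))
          X (Formula.mu X φ) sgn)^[Fintype.card S + 1]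
      (fun _ => none)
  | .nu X φ, η =>
    let U := T.sem (Formula.nu X φ) η
    let sg := SEM T φ (Function.update η X U)
    fun q =>
      if q.2 = Formula.nu X φ ∧ q.1 ∈ U then some .star
      else if h : ∃ ψ, ψ ≠ Formula.var X ∧ q.2 = Formula.subst ψ X (Formula.nu X φ) ∧
          sg (q.1, ψ) ≠ none
      then sg (q.1, h.choose) else none

/-!
Zielonka's argument, which works for arenas of any size as long as only finitely many priorities
occur. Proceed by induction on the number of priorities of a subarena `U`; let `d` be the largest,
`i` its parity and `j` the other player. The union `W` of all `j`-paradises is again a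
`j`-paradise, so it absorbs its own `j`-attractor `A`. In `U \ A`, remove the `i`-attractor of the
positions of priority `d`; by induction the rest is covered by an `i`-paradise and a `j`-paradise,
and the latter is empty since together with `A` it would be a `j`-paradise larger than `W`. Hence
player `i` wins all of `U \ A`: a play seeing priority `d` infinitely often is won by parity, any
other one eventually stays outside the attractor. A cover of the whole game by paradises yields
positional winning strategies, and the two players cannot win from the same position.
-/

open OrdinalApprox Filter

theorem fin_two_eq_of_ne_of_ne {x a b : Fin 2} (hab : a ≠ b) (hx : x ≠ a) : x = b := by
  revert x a b; decide

theorem fin_two_one_sub_ne (i : Fin 2) : 1 - i ≠ i := by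
  revert i; decide

theorem _root_.WellFounded.exists_forall_add_eq {α : Type*} {r : α → α → Prop}
    (hr : WellFounded r) {m : ℕ → α} (hm : ∀ n, m (n + 1) = m n ∨ r (m (n + 1)) (m n)) :
    ∃ N, ∀ k, m (N + k) = m N := by
  obtain ⟨_, ⟨N, rfl⟩, hN⟩ := hr.has_min (Set.range m) ⟨m 0, 0, rfl⟩
  refine ⟨N, fun k => ?_⟩
  induction k with
  | zero => rfl
  | succ k ih => exact ((hm (N + k)).resolve_right (ih ▸ hN _ ⟨_, rfl⟩)).trans ih

namespace ParityGame

universe u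

variable {Pos : Type u} (G : ParityGame Pos)

theorem isPlay_play_combine {i : Fin 2} (σ : G.Strategy i) (τ : G.Strategy (1 - i)) (p : Pos) :
    G.IsPlay (play (σ.combine τ) p) := by
  intro n
  change G.edge _ (σ.combine τ _ (play (σ.combine τ) p n))
  unfold Strategy.combine
  split_ifs with ho
  · exact σ.valid _ _ ho
  · exact τ.valid _ _ (fin_two_eq_of_ne_of_ne (fin_two_one_sub_ne i).symm ho)

theorem play_combine_succ_of_owner {i : Fin 2} (σ : G.Strategy i) (τ : G.Strategy (1 - i))
    (p : Pos) {n : ℕ} (ho : G.owner (play (σ.combine τ) p n) = i) :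
    play (σ.combine τ) p (n + 1) = σ.move (playHist (σ.combine τ) p n).2 (play (σ.combine τ) p n) :=
  if_pos ho

theorem not_winsFrom_zero_and_one (p : Pos) : ¬ (G.WinsFrom 0 p ∧ G.WinsFrom 1 p) := by
  rintro ⟨⟨σ, hσ⟩, ⟨τ, hτ⟩⟩
  have hcomm : σ.combine τ = τ.combine σ := by
    funext h q
    by_cases hq : G.owner q = 0
    · simp [Strategy.combine, hq]
    · simp [Strategy.combine, fin_two_eq_of_ne_of_ne (b := 1) (by decide) hq]
  have h0 : G.WinsPlaySeq 0 _ := hσ τ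
  have h1 : G.WinsPlaySeq 1 _ := hτ σ
  rw [WinsPlaySeq, hcomm] at h0
  rw [WinsPlaySeq, h0] at h1
  exact absurd h1 (by decide)

theorem not_winsFrom_of_winsFrom {i k : Fin 2} (hik : i ≠ k) {p : Pos} (hi : G.WinsFrom i p) :
    ¬ G.WinsFrom k p := by
  fin_cases i <;> fin_cases k
  all_goals first
    | exact absurd rfl hik
    | exact fun hk => G.not_winsFrom_zero_and_one p ⟨hi, hk⟩
    | exact fun hk => G.not_winsFrom_zero_and_one p ⟨hk, hi⟩

theorem maxInfPriority_comp_add (f : ℕ → Pos) (N : ℕ) :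
    G.maxInfPriority (fun n => f (N + n)) = G.maxInfPriority f := by
  have key : ∀ k, {n | G.priority (f (N + n)) = k}.Infinite ↔
      {n | G.priority (f n) = k}.Infinite := by
    intro k
    simp only [← Nat.frequently_atTop_iff_infinite]
    conv_rhs => rw [← map_add_atTop_eq_nat N, frequently_map]
    simp only [add_comm]
  simp only [maxInfPriority, key]

theorem winsPlaySeq_comp_add_iff {i : Fin 2} {f : ℕ → Pos} (N : ℕ) :
    G.WinsPlaySeq i (fun n => f (N + n)) ↔ G.WinsPlaySeq i f := by
  rw [WinsPlaySeq, WinsPlaySeq, maxInfPriority_comp_add]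

theorem winsPlaySeq_of_infinite_priority_eq {i : Fin 2} {f : ℕ → Pos} {d : ℕ}
    (hdi : d % 2 = i.val) (hinf : {n | G.priority (f n) = d}.Infinite)
    (hle : ∀ n, G.priority (f n) ≤ d) : G.WinsPlaySeq i f := by
  have hbound : ∀ k ∈ {k | {n | G.priority (f n) = k}.Infinite}, k ≤ d := by
    rintro k hk
    obtain ⟨n, rfl⟩ := hk.nonempty
    exact hle n
  have hmax : G.maxInfPriority f = d :=
    le_antisymm (csSup_le ⟨d, hinf⟩ hbound) (le_csSup ⟨d, hbound⟩ hinf)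
  rw [WinsPlaySeq, hmax, hdi]

def FollowsOn (i : Fin 2) (T : Set Pos) (g : Pos → Pos) (f : ℕ → Pos) : Prop :=
  ∀ n, f n ∈ T → G.owner (f n) = i → f (n + 1) = g (f n)

variable {G}

theorem FollowsOn.mono {i : Fin 2} {T T' : Set Pos} {g g' : Pos → Pos} {f : ℕ → Pos}
    (h : G.FollowsOn i T g f) (hT : T' ⊆ T) (hg : Set.EqOn g g' T') : G.FollowsOn i T' g' f :=
  fun n hn ho => (h n (hT hn) ho).trans (hg hn)

theorem FollowsOn.comp_add {i : Fin 2} {T : Set Pos} {g : Pos → Pos} {f : ℕ → Pos}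
    (h : G.FollowsOn i T g f) (N : ℕ) : G.FollowsOn i T g (fun n => f (N + n)) :=
  fun n => h (N + n)

variable (G)

def IsSubarena (U : Set Pos) : Prop := ∀ p ∈ U, ∃ q, G.edge p q ∧ q ∈ U

section Attractor

variable (a : Fin 2) (V B : Set Pos)

/-- Moves leaving `V` are ignored: this builds the attractor in the subgame on `V`. -/
def attrStep : Set Pos →o Set Pos where
  toFun X := B ∪ {p | p ∈ V ∧ ((G.owner p = a ∧ ∃ q, G.edge p q ∧ q ∈ V ∧ q ∈ X) ∨
      (G.owner p ≠ a ∧ ∀ q, G.edge p q → q ∈ V → q ∈ X))}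
  monotone' X Y hXY := by
    rintro p (hp | ⟨hpV, ⟨ho, q, he, hqV, hqX⟩ | ⟨ho, hall⟩⟩)
    · exact Or.inl hp
    · exact Or.inr ⟨hpV, Or.inl ⟨ho, q, he, hqV, hXY hqX⟩⟩
    · exact Or.inr ⟨hpV, Or.inr ⟨ho, fun q he hqV => hXY (hall q he hqV)⟩⟩

def attr : Set Pos := (G.attrStep a V B).lfp

/-- The stage of the transfinite approximation of the attractor at which `p` enters it. -/
noncomputable def attrRank (p : Pos) : Ordinal.{u} :=
  sInf {o | p ∈ lfpApprox (G.attrStep a V B) ⊥ o}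

variable {a V B}

theorem attrStep_attr : G.attrStep a V B (G.attr a V B) = G.attr a V B :=
  OrderHom.map_lfp _

theorem subset_attr : B ⊆ G.attr a V B := by
  rw [← attrStep_attr]
  exact Set.subset_union_left

theorem attr_subset (hB : B ⊆ V) : G.attr a V B ⊆ V :=
  OrderHom.lfp_le _ fun _ hp => hp.elim (fun h => hB h) And.left

theorem mem_attr_of_edge {p q : Pos} (hpV : p ∈ V) (ho : G.owner p = a) (he : G.edge p q)
    (hqV : q ∈ V) (hq : q ∈ G.attr a V B) : p ∈ G.attr a V B := by
  rw [← attrStep_attr]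
  exact Or.inr ⟨hpV, Or.inl ⟨ho, q, he, hqV, hq⟩⟩

theorem mem_attr_of_forall_edge {p : Pos} (hpV : p ∈ V) (ho : G.owner p ≠ a)
    (hall : ∀ q, G.edge p q → q ∈ V → q ∈ G.attr a V B) : p ∈ G.attr a V B := by
  rw [← attrStep_attr]
  exact Or.inr ⟨hpV, Or.inr ⟨ho, hall⟩⟩

theorem IsSubarena.diff_attr {U : Set Pos} (hU : G.IsSubarena U) :
    G.IsSubarena (U \ G.attr a U B) := by
  rintro p ⟨hpU, hpA⟩
  by_cases ho : G.owner p = a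
  · obtain ⟨q, he, hqU⟩ := hU p hpU
    exact ⟨q, he, hqU, fun hq => hpA (G.mem_attr_of_edge hpU ho he hqU hq)⟩
  · by_contra! hout
    refine hpA (G.mem_attr_of_forall_edge hpU ho fun q he hqU => ?_)
    exact by_contra fun hq => hout q he ⟨hqU, hq⟩

theorem exists_lt_attrRank_mem_attrStep {p : Pos} (hp : p ∈ G.attr a V B) :
    ∃ b < G.attrRank a V B p, p ∈ G.attrStep a V B (lfpApprox (G.attrStep a V B) ⊥ b) := by
  have hne : {o | p ∈ lfpApprox (G.attrStep a V B) ⊥ o}.Nonempty :=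
    ⟨_, by rwa [Set.mem_ofPred_eq, lfpApprox_ord_eq_lfp]⟩
  have hmem := csInf_mem hne
  rw [Set.mem_ofPred_eq, lfpApprox] at hmem
  simpa only [attrRank, bot_sup_eq, Set.iSup_eq_iUnion, Set.mem_iUnion, exists_prop] using hmem

theorem mem_attr_and_attrRank_lt {p q : Pos} {b : Ordinal.{u}}
    (hq : q ∈ lfpApprox (G.attrStep a V B) ⊥ b) (hb : b < G.attrRank a V B p) :
    q ∈ G.attr a V B ∧ G.attrRank a V B q < G.attrRank a V B p :=
  ⟨lfpApprox_le_of_mem_fixedPoints _ G.attrStep_attr bot_le b hq,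
    (csInf_le (OrderBot.bddBelow {o | q ∈ lfpApprox (G.attrStep a V B) ⊥ o}) hq).trans_lt hb⟩

theorem exists_edge_attrRank_lt {p : Pos} (hp : p ∈ G.attr a V B) (hpB : p ∉ B)
    (ho : G.owner p = a) :
    ∃ q, G.edge p q ∧ q ∈ V ∧ q ∈ G.attr a V B ∧ G.attrRank a V B q < G.attrRank a V B p := by
  obtain ⟨b, hb, hpB' | ⟨-, ⟨-, q, he, hqV, hq⟩ | ⟨ho', -⟩⟩⟩ := G.exists_lt_attrRank_mem_attrStep hp
  · exact absurd hpB' hpB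
  · exact ⟨q, he, hqV, G.mem_attr_and_attrRank_lt hq hb⟩
  · exact absurd ho ho'

theorem attrRank_lt_of_edge {p q : Pos} (hp : p ∈ G.attr a V B) (hpB : p ∉ B)
    (ho : G.owner p ≠ a) (he : G.edge p q) (hqV : q ∈ V) :
    q ∈ G.attr a V B ∧ G.attrRank a V B q < G.attrRank a V B p := by
  obtain ⟨b, hb, hpB' | ⟨-, ⟨ho', -⟩ | ⟨-, hall⟩⟩⟩ := G.exists_lt_attrRank_mem_attrStep hp
  · exact absurd hpB' hpB
  · exact absurd ho' ho
  · exact G.mem_attr_and_attrRank_lt (hall q he hqV) hb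

variable (a V B) in
noncomputable def attrMove (p : Pos) : Pos :=
  if h : p ∈ G.attr a V B ∧ p ∉ B ∧ G.owner p = a then
    (G.exists_edge_attrRank_lt h.1 h.2.1 h.2.2).choose
  else p

theorem attrMove_spec {p : Pos} (hp : p ∈ G.attr a V B) (hpB : p ∉ B) (ho : G.owner p = a) :
    G.edge p (G.attrMove a V B p) ∧ G.attrMove a V B p ∈ V ∧
      G.attrMove a V B p ∈ G.attr a V B ∧
      G.attrRank a V B (G.attrMove a V B p) < G.attrRank a V B p := by
  rw [attrMove, dif_pos ⟨hp, hpB, ho⟩]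
  exact (G.exists_edge_attrRank_lt hp hpB ho).choose_spec

theorem exists_mem_of_mem_attr {f : ℕ → Pos} (hplay : G.IsPlay f) (hV : ∀ n, f n ∈ V)
    (hfol : G.FollowsOn a (G.attr a V B \ B) (G.attrMove a V B) f) {m : ℕ}
    (hm : f m ∈ G.attr a V B) : ∃ k ≥ m, f k ∈ B := by
  suffices ∀ o m, G.attrRank a V B (f m) = o → f m ∈ G.attr a V B → ∃ k ≥ m, f k ∈ B from
    this _ m rfl hm
  intro o
  induction o using WellFoundedLT.induction with
  | _ o ih =>
  rintro m rfl hm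
  by_cases hmB : f m ∈ B
  · exact ⟨m, le_rfl, hmB⟩
  have hstep : f (m + 1) ∈ G.attr a V B ∧
      G.attrRank a V B (f (m + 1)) < G.attrRank a V B (f m) := by
    by_cases ho : G.owner (f m) = a
    · rw [hfol m ⟨hm, hmB⟩ ho]
      exact (G.attrMove_spec hm hmB ho).2.2
    · exact G.attrRank_lt_of_edge hm hmB ho (hplay m) (hV (m + 1))
  obtain ⟨k, hk, hkB⟩ := ih _ hstep.2 (m + 1) rfl hstep.1
  exact ⟨k, by omega, hkB⟩

end Attractor

/-- An `i`-paradise in Zielonka's sense, of the subgame on `U`. -/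
structure IsParadise (U : Set Pos) (i : Fin 2) (T : Set Pos) (g : Pos → Pos) : Prop where
  subset : T ⊆ U
  trap : ∀ p ∈ T, G.owner p ≠ i → ∀ q, G.edge p q → q ∈ U → q ∈ T
  move_edge : ∀ p ∈ T, G.owner p = i → G.edge p (g p)
  move_mem : ∀ p ∈ T, G.owner p = i → g p ∈ T
  wins : ∀ f, G.IsPlay f → (∀ n, f n ∈ T) → G.FollowsOn i T g f → G.WinsPlaySeq i f

theorem isParadise_empty (U : Set Pos) (i : Fin 2) (g : Pos → Pos) : G.IsParadise U i ∅ g :=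
  ⟨Set.empty_subset U, fun _ h => h.elim, fun _ h => h.elim, fun _ h => h.elim,
    fun _ _ h _ => (h 0).elim⟩

namespace IsParadise

variable {G} {U T : Set Pos} {i : Fin 2} {g : Pos → Pos} {f : ℕ → Pos}

theorem forall_mem_add (hP : G.IsParadise U i T g) (hplay : G.IsPlay f) (hU : ∀ n, f n ∈ U)
    (hfol : G.FollowsOn i T g f) {m : ℕ} (hm : f m ∈ T) (k : ℕ) : f (m + k) ∈ T := by
  induction k with
  | zero => exact hm
  | succ k ih =>
    by_cases ho : G.owner (f (m + k)) = i
    · rw [← add_assoc, hfol _ ih ho]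
      exact hP.move_mem _ ih ho
    · exact hP.trap _ ih ho _ (hplay _) (hU _)

theorem winsPlaySeq_of_forall_mem_add (hP : G.IsParadise U i T g) (hplay : G.IsPlay f) {N : ℕ}
    (hT : ∀ k, f (N + k) ∈ T) (hfol : G.FollowsOn i T g f) : G.WinsPlaySeq i f :=
  (G.winsPlaySeq_comp_add_iff N).1 <|
    hP.wins _ (fun k => hplay (N + k)) hT (hfol.comp_add N)

theorem winsPlaySeq_of_mem (hP : G.IsParadise U i T g) (hplay : G.IsPlay f)
    (hU : ∀ n, f n ∈ U) (hfol : G.FollowsOn i T g f) {m : ℕ} (hm : f m ∈ T) :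
    G.WinsPlaySeq i f :=
  hP.winsPlaySeq_of_forall_mem_add hplay (hP.forall_mem_add hplay hU hfol hm) hfol

/-- Player `b` cannot enter its own attractor from outside. -/
theorem of_diff_attr {b : Fin 2} {B : Set Pos} (hib : i ≠ b)
    (hP : G.IsParadise (U \ G.attr b U B) i T g) : G.IsParadise U i T g where
  subset := hP.subset.trans Set.sdiff_subset
  trap p hp ho q he hqU := by
    have hpU := hP.subset hp
    refine hP.trap p hp ho q he ⟨hqU, fun hq => hpU.2 ?_⟩
    exact G.mem_attr_of_edge hpU.1 (fin_two_eq_of_ne_of_ne hib ho) he hqU hq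
  move_edge := hP.move_edge
  move_mem := hP.move_mem
  wins := hP.wins

theorem union_of_diff {W : Set Pos} {gW : Pos → Pos} (hW : G.IsParadise U i W gW)
    (hP : G.IsParadise (U \ W) i T g) : G.IsParadise U i (T ∪ W) (W.piecewise gW g) := by
  have hTW : T ⊆ Wᶜ := fun p hp => (hP.subset hp).2
  have hTU : T ⊆ U := fun p hp => (hP.subset hp).1
  refine ⟨Set.union_subset hTU hW.subset, ?_, ?_, ?_, ?_⟩
  · rintro p (hp | hp) ho q he hqU
    · by_cases hqW : q ∈ W
      · exact Or.inr hqW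
      · exact Or.inl (hP.trap p hp ho q he ⟨hqU, hqW⟩)
    · exact Or.inr (hW.trap p hp ho q he hqU)
  · rintro p (hp | hp) ho
    · rw [Set.piecewise_eq_of_notMem _ _ _ (hTW hp)]
      exact hP.move_edge p hp ho
    · rw [Set.piecewise_eq_of_mem _ _ _ hp]
      exact hW.move_edge p hp ho
  · rintro p (hp | hp) ho
    · rw [Set.piecewise_eq_of_notMem _ _ _ (hTW hp)]
      exact Or.inl (hP.move_mem p hp ho)
    · rw [Set.piecewise_eq_of_mem _ _ _ hp]
      exact Or.inr (hW.move_mem p hp ho)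
  · intro f hplay hf hfol
    by_cases hmW : ∃ m, f m ∈ W
    · obtain ⟨m, hm⟩ := hmW
      exact hW.winsPlaySeq_of_mem hplay (fun n => (Set.union_subset hTU hW.subset) (hf n))
        (hfol.mono Set.subset_union_right (Set.piecewise_eqOn _ _ _)) hm
    · have hT n : f n ∈ T := (hf n).resolve_right fun h => hmW ⟨n, h⟩
      exact hP.wins f hplay hT
        (hfol.mono Set.subset_union_left ((Set.piecewise_eqOn_compl _ _ _).mono hTW))

theorem attr {W : Set Pos} (hW : G.IsParadise U i W g) :
    G.IsParadise U i (G.attr i U W) (W.piecewise g (G.attrMove i U W)) := by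
  have hAU : G.attr i U W ⊆ U := G.attr_subset hW.subset
  refine ⟨hAU, ?_, ?_, ?_, ?_⟩
  · intro p hp ho q he hqU
    by_cases hpW : p ∈ W
    · exact G.subset_attr (hW.trap p hpW ho q he hqU)
    · exact (G.attrRank_lt_of_edge hp hpW ho he hqU).1
  · intro p hp ho
    by_cases hpW : p ∈ W
    · rw [Set.piecewise_eq_of_mem _ _ _ hpW]
      exact hW.move_edge p hpW ho
    · rw [Set.piecewise_eq_of_notMem _ _ _ hpW]
      exact (G.attrMove_spec hp hpW ho).1
  · intro p hp ho
    by_cases hpW : p ∈ W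
    · rw [Set.piecewise_eq_of_mem _ _ _ hpW]
      exact G.subset_attr (hW.move_mem p hpW ho)
    · rw [Set.piecewise_eq_of_notMem _ _ _ hpW]
      exact (G.attrMove_spec hp hpW ho).2.2.1
  · intro f hplay hf hfol
    have hU n : f n ∈ U := hAU (hf n)
    obtain ⟨k, -, hk⟩ := G.exists_mem_of_mem_attr hplay hU
      (hfol.mono Set.sdiff_subset fun p hp => Set.piecewise_eq_of_notMem _ _ _ hp.2) (hf 0)
    exact hW.winsPlaySeq_of_mem hplay hU
      (hfol.mono G.subset_attr (Set.piecewise_eqOn _ _ _)) hk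

end IsParadise

def maxParadise (U : Set Pos) (i : Fin 2) : Set Pos :=
  ⋃₀ {T | ∃ g, G.IsParadise U i T g}

variable {G} in
theorem IsParadise.subset_maxParadise {U T : Set Pos} {i : Fin 2} {g : Pos → Pos}
    (hP : G.IsParadise U i T g) : T ⊆ G.maxParadise U i :=
  Set.subset_sUnion_of_mem ⟨g, hP⟩

/-- Well-order the paradises and play, at each position, the strategy of the least paradise
containing it. Along a play this least paradise can only decrease, so it is eventually constant,
and from then on the play is won inside it. -/
theorem exists_isParadise_maxParadise (U : Set Pos) (i : Fin 2) :
    ∃ g, G.IsParadise U i (G.maxParadise U i) g := by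
  let ι := {T : Set Pos // ∃ g, G.IsParadise U i T g}
  have hwf : WellFounded (WellOrderingRel : ι → ι → Prop) := IsWellFounded.wf
  choose st hst using fun T : ι => T.2
  have hleast : ∀ p, ∃ T : ι, p ∈ G.maxParadise U i →
      p ∈ T.1 ∧ ∀ T' : ι, p ∈ T'.1 → ¬ WellOrderingRel T' T := by
    intro p
    by_cases hp : p ∈ G.maxParadise U i
    · obtain ⟨T, hT, hpT⟩ := hp
      have hne : {T : ι | p ∈ T.1}.Nonempty := ⟨⟨T, hT⟩, hpT⟩
      exact ⟨hwf.min _ hne, fun _ => ⟨hwf.min_mem _ hne, fun _ h => hwf.not_lt_min _ h⟩⟩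
    · exact ⟨⟨∅, id, G.isParadise_empty U i id⟩, fun h => absurd h hp⟩
  choose idx hidx using hleast
  have hsub : ∀ T : ι, T.1 ⊆ G.maxParadise U i := fun T => (hst T).subset_maxParadise
  have hU : G.maxParadise U i ⊆ U := Set.sUnion_subset fun _ ⟨_, hT⟩ => hT.subset
  refine ⟨fun p => st (idx p) p, hU, ?_, ?_, ?_, ?_⟩
  · intro p hp ho q he hqU
    exact hsub _ ((hst (idx p)).trap p (hidx p hp).1 ho q he hqU)
  · intro p hp ho
    exact (hst (idx p)).move_edge p (hidx p hp).1 ho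
  · intro p hp ho
    exact hsub _ ((hst (idx p)).move_mem p (hidx p hp).1 ho)
  · intro f hplay hf hfol
    have hmem n : f n ∈ (idx (f n)).1 := (hidx (f n) (hf n)).1
    have hnext n : f (n + 1) ∈ (idx (f n)).1 := by
      by_cases ho : G.owner (f n) = i
      · rw [hfol n (hf n) ho]
        exact (hst _).move_mem _ (hmem n) ho
      · exact (hst _).trap _ (hmem n) ho _ (hplay n) (hU (hf (n + 1)))
    have hdecr n :
        idx (f (n + 1)) = idx (f n) ∨ WellOrderingRel (idx (f (n + 1))) (idx (f n)) := by
      rcases trichotomous_of WellOrderingRel (idx (f (n + 1))) (idx (f n)) with h | h | h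
      · exact Or.inr h
      · exact Or.inl h
      · exact absurd h ((hidx _ (hf (n + 1))).2 _ (hnext n))
    obtain ⟨N, hconst⟩ := hwf.exists_forall_add_eq (m := fun n => idx (f n)) hdecr
    refine (G.winsPlaySeq_comp_add_iff N).1 <| (hst (idx (f N))).wins _
      (fun k => hplay (N + k)) (fun k => hconst k ▸ hmem (N + k)) fun k _ ho => ?_
    exact (hfol (N + k) (hf _) ho).trans (by rw [hconst k])

theorem exists_isParadise_self_of_diff_attr {Z D : Set Pos} {i : Fin 2} {g : Pos → Pos}
    (hZ : G.IsSubarena Z) (hDZ : D ⊆ Z)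
    (hD : ∀ f, G.IsPlay f → (∀ n, f n ∈ Z) → {n | f n ∈ D}.Infinite → G.WinsPlaySeq i f)
    (hP : G.IsParadise (Z \ G.attr i Z D) i (Z \ G.attr i Z D) g) :
    ∃ g', G.IsParadise Z i Z g' := by
  choose! s hs using hZ
  set A := G.attr i Z D
  set g' := (Z \ A).piecewise g (D.piecewise s (G.attrMove i Z D)) with hg'
  have hmove : ∀ p ∈ Z, G.owner p = i → G.edge p (g' p) ∧ g' p ∈ Z := by
    intro p hp ho
    by_cases hpZ' : p ∈ Z \ A
    · rw [hg', Set.piecewise_eq_of_mem _ _ _ hpZ']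
      exact ⟨hP.move_edge p hpZ' ho, (hP.move_mem p hpZ' ho).1⟩
    have hpA : p ∈ A := not_not.1 fun h => hpZ' ⟨hp, h⟩
    rw [hg', Set.piecewise_eq_of_notMem _ _ _ hpZ']
    by_cases hpD : p ∈ D
    · rw [Set.piecewise_eq_of_mem _ _ _ hpD]
      exact hs p hp
    · rw [Set.piecewise_eq_of_notMem _ _ _ hpD]
      exact ⟨(G.attrMove_spec hpA hpD ho).1, (G.attrMove_spec hpA hpD ho).2.1⟩
  refine ⟨g', subset_rfl, fun _ _ _ _ _ => id, fun p hp ho => (hmove p hp ho).1,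
    fun p hp ho => (hmove p hp ho).2, fun f hplay hf hfol => ?_⟩
  by_cases hinf : {n | f n ∈ D}.Infinite
  · exact hD f hplay hf hinf
  obtain ⟨N, hN⟩ := (Set.not_infinite.1 hinf).bddAbove
  have hnotA : ∀ n, N < n → f n ∉ A := by
    intro n hn hnA
    have hfolA : G.FollowsOn i (A \ D) (G.attrMove i Z D) f :=
      hfol.mono (fun p hp => G.attr_subset hDZ hp.1) fun p hp => by
        rw [hg', Set.piecewise_eq_of_notMem _ _ _ fun h => h.2 hp.1,
          Set.piecewise_eq_of_notMem _ _ _ hp.2]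
    obtain ⟨k, hk, hkD⟩ := G.exists_mem_of_mem_attr hplay hf hfolA hnA
    exact absurd (hN hkD) (by omega)
  exact hP.winsPlaySeq_of_forall_mem_add hplay (N := N + 1)
    (fun k => ⟨hf _, hnotA _ (by omega)⟩) (hfol.mono Set.sdiff_subset (Set.piecewise_eqOn _ _ _))

def HasParadiseCover (U : Set Pos) : Prop :=
  ∃ (T : Fin 2 → Set Pos) (g : Fin 2 → Pos → Pos),
    (∀ i, G.IsParadise U i (T i) (g i)) ∧ U ⊆ ⋃ i, T i

theorem hasParadiseCover_of_priority_le {U : Set Pos} (hU : G.IsSubarena U) {d : ℕ}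
    (hd : ∀ p ∈ U, G.priority p ≤ d)
    (ih : ∀ U' ⊆ U, G.IsSubarena U' → (∀ p ∈ U', G.priority p ≠ d) → G.HasParadiseCover U') :
    G.HasParadiseCover U := by
  set i : Fin 2 := ⟨d % 2, Nat.mod_lt _ two_pos⟩
  set j := 1 - i
  obtain ⟨gW, hW⟩ := G.exists_isParadise_maxParadise U j
  set A := G.attr j U (G.maxParadise U j)
  obtain ⟨gA, hA⟩ : ∃ gA, G.IsParadise U j A gA := ⟨_, hW.attr⟩
  set Z := U \ A
  have hZ : G.IsSubarena Z := hU.diff_attr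
  set D := {p | p ∈ Z ∧ G.priority p = d}
  obtain ⟨T, g, hT, hcover⟩ := ih (Z \ G.attr i Z D) (Set.sdiff_subset.trans Set.sdiff_subset)
    hZ.diff_attr fun p hp hpd => hp.2 (G.subset_attr ⟨hp.1, hpd⟩)
  have hTj : T j = ∅ := by
    refine Set.eq_empty_of_forall_notMem fun p hp => ((hT j).subset hp).1.2 ?_
    have hPj := hA.union_of_diff ((hT j).of_diff_attr (fin_two_one_sub_ne i))
    exact G.subset_attr (hPj.subset_maxParadise (Or.inl hp))
  have hTi : T i = Z \ G.attr i Z D := by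
    refine (hT i).subset.antisymm fun p hp => ?_
    obtain ⟨k, hk⟩ := Set.mem_iUnion.1 (hcover hp)
    by_cases hki : k = i
    · exact hki ▸ hk
    · rw [fin_two_eq_of_ne_of_ne (fin_two_one_sub_ne i).symm hki, hTj] at hk
      exact hk.elim
  obtain ⟨gZ, hgZ⟩ := G.exists_isParadise_self_of_diff_attr hZ (fun p hp => hp.1)
    (fun f _ hf hinf => G.winsPlaySeq_of_infinite_priority_eq rfl (hinf.mono fun _ hn => hn.2)
      fun n => hd _ (hf n).1)
    (hTi ▸ hT i)
  have hZi : G.IsParadise U i Z gZ := hgZ.of_diff_attr (fin_two_one_sub_ne i).symm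
  refine ⟨fun k => if k = i then Z else A, fun k => if k = i then gZ else gA, fun k => ?_,
    fun p hp => ?_⟩
  · dsimp only
    by_cases hki : k = i
    · simpa only [hki, if_true] using hZi
    · rw [if_neg hki, if_neg hki, fin_two_eq_of_ne_of_ne (fin_two_one_sub_ne i).symm hki]
      exact hA
  · by_cases hpA : p ∈ A
    · exact Set.mem_iUnion.2 ⟨j, by simpa only [j, if_neg (fin_two_one_sub_ne i)] using hpA⟩
    · exact Set.mem_iUnion.2 ⟨i, by simpa only [if_true] using ⟨hp, hpA⟩⟩

theorem hasParadiseCover (hfin : (Set.range G.priority).Finite) {U : Set Pos}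
    (hU : G.IsSubarena U) : G.HasParadiseCover U := by
  induction hn : (G.priority '' U).ncard using Nat.strong_induction_on generalizing U with
  | _ n ih =>
  rcases U.eq_empty_or_nonempty with rfl | hne
  · exact ⟨fun _ => ∅, fun _ => id, fun i => G.isParadise_empty ∅ i id, Set.empty_subset _⟩
  have hfinU : (G.priority '' U).Finite := hfin.subset (Set.image_subset_range _ _)
  set d := sSup (G.priority '' U)
  have hdU : d ∈ G.priority '' U := Nat.sSup_mem (hne.image _) hfinU.bddAbove
  refine G.hasParadiseCover_of_priority_le hU (fun p hp => le_csSup hfinU.bddAbove ⟨p, hp, rfl⟩)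
    fun U' hU'U hU' hd => ih _ ?_ hU' rfl
  rw [← hn]
  calc (G.priority '' U').ncard ≤ (G.priority '' U \ {d}).ncard :=
        Set.ncard_le_ncard (by rintro _ ⟨p, hp, rfl⟩; exact ⟨⟨p, hU'U hp, rfl⟩, hd p hp⟩)
          hfinU.sdiff
    _ < (G.priority '' U).ncard := Set.ncard_sdiff_singleton_lt_of_mem hdU hfinU

variable {G} in
theorem IsParadise.exists_positional_winsFrom {i : Fin 2} {T : Set Pos} {g : Pos → Pos}
    (hP : G.IsParadise Set.univ i T g) :
    ∃ σ : G.Strategy i, σ.Positional ∧ ∀ p ∈ T, σ.WinsFrom p := by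
  set m := T.piecewise g fun p => (G.total p).choose with hm_def
  have hm : ∀ p, G.owner p = i → G.edge p (m p) := by
    intro p ho
    by_cases hp : p ∈ T
    · rw [hm_def, Set.piecewise_eq_of_mem _ _ _ hp]
      exact hP.move_edge p hp ho
    · rw [hm_def, Set.piecewise_eq_of_notMem _ _ _ hp]
      exact (G.total p).choose_spec
  let σ : G.Strategy i := ⟨fun _ => m, fun _ => hm⟩
  refine ⟨σ, fun _ _ _ => rfl, fun p hp τ => ?_⟩
  have hfol : G.FollowsOn i T g (play (σ.combine τ) p) := fun n hn ho => by
    rw [G.play_combine_succ_of_owner σ τ p ho]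
    exact Set.piecewise_eq_of_mem T g (fun p => (G.total p).choose) hn
  exact hP.winsPlaySeq_of_mem (G.isPlay_play_combine σ τ p) (fun _ => trivial) hfol (m := 0) hp

end ParityGame

/-- positional determinacy of parity games: the winning sets `W₀`, `W₁`
partition the positions, and each player wins positionally from its winning set. -/
theorem parity_positional_determinacy {Pos : Type*} (G : ParityGame Pos)
    (hfin : (Set.range G.priority).Finite) :
    (∀ p : Pos, (G.WinsFrom 0 p ∧ ¬ G.WinsFrom 1 p) ∨ (G.WinsFrom 1 p ∧ ¬ G.WinsFrom 0 p)) ∧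
    (∀ i : Fin 2, ∃ σ : G.Strategy i, σ.Positional ∧ ∀ p, G.WinsFrom i p → σ.WinsFrom p) := by
  obtain ⟨T, g, hT, hcover⟩ :=
    G.hasParadiseCover hfin fun p _ => (G.total p).imp fun _ h => ⟨h, trivial⟩
  choose σ hσ hσT using fun i => (hT i).exists_positional_winsFrom
  have hwin i : ∀ p ∈ T i, G.WinsFrom i p := fun p hp => ⟨σ i, hσT i p hp⟩
  have hmem i p (hp : G.WinsFrom i p) : p ∈ T i := by
    obtain ⟨k, hk⟩ := Set.mem_iUnion.1 (hcover (Set.mem_univ p))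
    by_contra hpi
    exact G.not_winsFrom_of_winsFrom (fun hki : k = i => hpi (hki ▸ hk)) (hwin k p hk) hp
  refine ⟨fun p => ?_, fun i => ⟨σ i, hσ i, fun p hp => hσT i p (hmem i p hp)⟩⟩
  obtain ⟨k, hk⟩ := Set.mem_iUnion.1 (hcover (Set.mem_univ p))
  fin_cases k
  · exact Or.inl ⟨hwin 0 p hk, G.not_winsFrom_of_winsFrom (by decide) (hwin 0 p hk)⟩
  · exact Or.inr ⟨hwin 1 p hk, G.not_winsFrom_of_winsFrom (by decide) (hwin 1 p hk)⟩

end MuCalc
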